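/- Let p be a polynomial in ℝ[x₁,…,x_d]. Then the smallest linear subspace containing p that is both translation invariant and dilation invariant equals the linear span of the monomials {x^β : β ∈ ℕ^d and there exists α ∈ ℕ^d with β ≤ α componentwise and the coefficient of x^α in p nonzero}. In particular, if the coefficient of x^α in p is nonzero, then x^β lies in this subspace for every β ≤ α. -/

import Mathlib

/-!
Dilating `p` by `y` gives `∑_α y^α c_α x^α`, a polynomial in `y` with coefficients in the
polynomial ring. Distinct monomials in `y` are linearly independent as functions of `y` over an
infinite field, so a subspace containing every dilate of `p` contains every `c_α x^α`. Likewise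
translating `x^α` by `y` gives `∑_{γ ≤ α} y^γ binom(α, γ) x^(α - γ)`, and since the binomial
coefficients do not vanish in characteristic zero, a translation invariant subspace containing
`x^α` contains every `x^β` with `β ≤ α`. Conversely, the span of the monomials indexed by a lower
set of exponents is translation and dilation invariant, by the same two expansions.
-/

open MvPolynomial Finset

theorem Submodule.mem_of_forall_sum_prod_pow_smul_mem {K V ι σ : Type*} [Field K] [Infinite K]
    [AddCommGroup V] [Module K V] [Fintype σ] (W : Submodule K V) {e : ι → σ → ℕ}
    (he : Function.Injective e) (s : Finset ι) (v : ι → V)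
    (h : ∀ y : σ → K, ∑ a ∈ s, (∏ i, y i ^ e a i) • v a ∈ W) {a : ι} (ha : a ∈ s) :
    v a ∈ W := by
  classical
  rw [← Submodule.Quotient.mk_eq_zero, ← Module.forall_dual_apply_eq_zero_iff K]
  intro φ
  set ψ := φ ∘ₗ W.mkQ
  -- the polynomial `∑ ψ (v b) y^(e b)` vanishes on all of `K^σ`, so all its coefficients vanish
  have hq : ∑ b ∈ s, monomial (Finsupp.equivFunOnFinite.symm (e b)) (ψ (v b)) = 0 := by
    refine MvPolynomial.funext fun y => ?_
    have hy : ψ (∑ b ∈ s, (∏ i, y i ^ e b i) • v b) = 0 := by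
      rw [LinearMap.comp_apply, Submodule.mkQ_apply, (Submodule.Quotient.mk_eq_zero W).2 (h y),
        map_zero]
    simpa [eval_monomial, Finsupp.prod_fintype, mul_comm] using hy
  simpa [coeff_sum, coeff_monomial, he.eq_iff, ha, ψ] using
    congrArg (coeff (Finsupp.equivFunOnFinite.symm (e a))) hq

namespace MvPolynomial
variable {σ R : Type*} [CommSemiring R]

noncomputable def translate (y : σ → R) : MvPolynomial σ R →ₐ[R] MvPolynomial σ R :=
  bind₁ fun i => X i + C (y i)

noncomputable def dilate (y : σ → R) : MvPolynomial σ R →ₐ[R] MvPolynomial σ R :=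
  bind₁ fun i => C (y i) * X i

theorem monomial_one_eq_prod_X_pow [Fintype σ] (α : σ →₀ ℕ) :
    monomial α (1 : R) = ∏ i, X i ^ α i := by
  rw [monomial_eq, C_1, one_mul, Finsupp.prod_fintype _ _ fun _ => pow_zero _]

theorem dilate_monomial [Fintype σ] (y : σ → R) (α : σ →₀ ℕ) (c : R) :
    dilate y (monomial α c) = (∏ i, y i ^ α i) • monomial α c := by
  rw [← mul_one c, ← smul_eq_mul, ← smul_monomial, map_smul, smul_comm,
    monomial_one_eq_prod_X_pow, dilate, map_prod]
  simp [mul_pow, prod_mul_distrib, smul_eq_C_mul]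

theorem dilate_eq_sum [Fintype σ] (y : σ → R) (p : MvPolynomial σ R) :
    dilate y p = ∑ α ∈ p.support, (∏ i, y i ^ α i) • monomial α (coeff α p) := by
  conv_lhs => rw [p.as_sum]
  simp only [map_sum, dilate_monomial]

theorem X_add_C_pow_eq_sum (y : R) (i : σ) (n : ℕ) : (X i + C y) ^ n =
    ∑ k ∈ range (n + 1), y ^ k • (n.choose k : R) • (X i : MvPolynomial σ R) ^ (n - k) := by
  rw [add_comm, add_pow]
  refine sum_congr rfl fun k _ => ?_
  simp only [smul_eq_C_mul, map_natCast, C_pow]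
  ring

theorem translate_monomial [Fintype σ] [DecidableEq σ] (y : σ → R) (α : σ →₀ ℕ) :
    translate y (monomial α 1) =
      ∑ f ∈ Fintype.piFinset fun i => range (α i + 1),
        (∏ i, y i ^ f i) • (∏ i, ((α i).choose (f i) : R)) •
          monomial (α - Finsupp.equivFunOnFinite.symm f) 1 := by
  rw [monomial_one_eq_prod_X_pow, translate, map_prod]
  simp only [map_pow, bind₁_X_right, X_add_C_pow_eq_sum]
  rw [prod_univ_sum]
  refine sum_congr rfl fun f _ => ?_
  rw [prod_smul, prod_smul, monomial_one_eq_prod_X_pow]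
  rfl

def IsTranslationInvariant (W : Submodule R (MvPolynomial σ R)) : Prop :=
  ∀ q ∈ W, ∀ y : σ → R, translate y q ∈ W

def IsDilationInvariant (W : Submodule R (MvPolynomial σ R)) : Prop :=
  ∀ q ∈ W, ∀ y : σ → R, dilate y q ∈ W

noncomputable def translationDilationClosure (p : MvPolynomial σ R) :
    Submodule R (MvPolynomial σ R) :=
  sInf {W | p ∈ W ∧ IsTranslationInvariant W ∧ IsDilationInvariant W}

theorem isDilationInvariant_restrictSupport [Fintype σ] (s : Set (σ →₀ ℕ)) :
    IsDilationInvariant (restrictSupport R s) := by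
  intro q hq y
  rw [dilate_eq_sum]
  refine Submodule.sum_mem _ fun α hα => Submodule.smul_mem _ _ ?_
  exact (monomial_mem_restrictSupport R).2 (.inl (((mem_restrictSupport_iff R).1 hq) hα))

theorem isTranslationInvariant_restrictSupport [Fintype σ] {s : Set (σ →₀ ℕ)}
    (hs : IsLowerSet s) : IsTranslationInvariant (restrictSupport R s) := by
  classical
  intro q hq y
  suffices restrictSupport R s ≤ (restrictSupport R s).comap (translate y).toLinearMap from this hq
  rw [restrictSupport_eq_span, Submodule.span_le]
  rintro _ ⟨α, hα, rfl⟩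
  rw [SetLike.mem_coe, Submodule.mem_comap, AlgHom.toLinearMap_apply, translate_monomial]
  exact Submodule.sum_mem _ fun f _ => Submodule.smul_mem _ _ <| Submodule.smul_mem _ _ <|
    Submodule.subset_span ⟨_, hs tsub_le_self hα, rfl⟩

section Field

variable {K : Type*} [Fintype σ] [Field K] {W : Submodule K (MvPolynomial σ K)}

theorem IsDilationInvariant.monomial_mem [Infinite K] (hW : IsDilationInvariant W)
    {p : MvPolynomial σ K} (hp : p ∈ W) {α : σ →₀ ℕ} (hα : coeff α p ≠ 0) : monomial α 1 ∈ W := by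
  have h : monomial α (coeff α p) ∈ W :=
    W.mem_of_forall_sum_prod_pow_smul_mem DFunLike.coe_injective p.support
      (fun γ => monomial γ (coeff γ p)) (fun y => dilate_eq_sum y p ▸ hW p hp y)
      (mem_support_iff.2 hα)
  rwa [← mul_one (coeff α p), ← smul_eq_mul, ← smul_monomial, Submodule.smul_mem_iff _ hα] at h

variable [CharZero K]

theorem IsTranslationInvariant.monomial_mem_of_le (hW : IsTranslationInvariant W)
    {α β : σ →₀ ℕ} (hα : monomial α 1 ∈ W) (hβ : β ≤ α) : monomial β 1 ∈ W := by
  classical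
  have h := W.mem_of_forall_sum_prod_pow_smul_mem Function.injective_id _ _
    (fun y => translate_monomial y α ▸ hW _ hα y) (a := ⇑(α - β))
    (Fintype.mem_piFinset.2 fun i => mem_range.2 (Nat.lt_succ_of_le tsub_le_self))
  simp only [Finsupp.equivFunOnFinite_symm_coe, tsub_tsub_cancel_of_le hβ] at h
  refine (Submodule.smul_mem_iff _ (prod_ne_zero_iff.2 fun i _ => ?_)).1 h
  exact Nat.cast_ne_zero.2 (Nat.choose_pos tsub_le_self).ne'

theorem translationDilationClosure_eq_restrictSupport (p : MvPolynomial σ K) :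
    translationDilationClosure p =
      restrictSupport K (lowerClosure (p.support : Set (σ →₀ ℕ))) := by
  refine le_antisymm (sInf_le ⟨?_, isTranslationInvariant_restrictSupport (lowerClosure _).lower,
    isDilationInvariant_restrictSupport _⟩) (le_sInf ?_)
  · exact (mem_restrictSupport_iff K).2 subset_lowerClosure
  · rintro W ⟨hp, hT, hD⟩
    rw [restrictSupport_eq_span, Submodule.span_le]
    rintro _ ⟨β, ⟨α, hα, hβα⟩, rfl⟩
    exact hT.monomial_mem_of_le (hD.monomial_mem hp (mem_support_iff.1 hα)) hβα

end Field

end MvPolynomial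

theorem stmt_4 (d : ℕ) (p : MvPolynomial (Fin d) ℝ) :
    sInf {W : Submodule ℝ (MvPolynomial (Fin d) ℝ) | p ∈ W ∧
        (∀ q ∈ W, ∀ y : Fin d → ℝ,
          bind₁ (fun i => (X i : MvPolynomial (Fin d) ℝ) + C (y i)) q ∈ W) ∧
        (∀ q ∈ W, ∀ y : Fin d → ℝ,
          bind₁ (fun i => (C (y i) : MvPolynomial (Fin d) ℝ) * X i) q ∈ W)} =
      Submodule.span ℝ {q : MvPolynomial (Fin d) ℝ |
        ∃ β α : Fin d →₀ ℕ, β ≤ α ∧ coeff α p ≠ 0 ∧ q = monomial β (1 : ℝ)} ∧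
    ∀ α : Fin d →₀ ℕ, coeff α p ≠ 0 → ∀ β ≤ α,
      monomial β (1 : ℝ) ∈
        sInf {W : Submodule ℝ (MvPolynomial (Fin d) ℝ) | p ∈ W ∧
          (∀ q ∈ W, ∀ y : Fin d → ℝ,
            bind₁ (fun i => (X i : MvPolynomial (Fin d) ℝ) + C (y i)) q ∈ W) ∧
          (∀ q ∈ W, ∀ y : Fin d → ℝ,
            bind₁ (fun i => (C (y i) : MvPolynomial (Fin d) ℝ) * X i) q ∈ W)} := by
  change translationDilationClosure p = _ ∧ ∀ α, _ → ∀ β ≤ α, _ ∈ translationDilationClosure p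
  have hgen : {q : MvPolynomial (Fin d) ℝ |
      ∃ β α : Fin d →₀ ℕ, β ≤ α ∧ coeff α p ≠ 0 ∧ q = monomial β (1 : ℝ)} =
      (monomial · 1) '' lowerClosure (p.support : Set (Fin d →₀ ℕ)) := by
    ext q
    exact ⟨fun ⟨β, α, hβα, hα, hq⟩ => ⟨β, ⟨α, mem_support_iff.2 hα, hβα⟩, hq.symm⟩,
      fun ⟨β, ⟨α, hα, hβα⟩, hq⟩ => ⟨β, α, hβα, mem_support_iff.1 hα, hq.symm⟩⟩
  rw [hgen, ← restrictSupport_eq_span, translationDilationClosure_eq_restrictSupport]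
  exact ⟨rfl, fun α hα β hβ =>
    (monomial_mem_restrictSupport ℝ).2 (.inl ⟨α, mem_support_iff.2 hα, hβ⟩)⟩
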